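/- arXiv:1906.11030 — 2 statements merged into one kernel-verified Lean document; each statement's English description precedes it below -/
import Mathlib

section
/- Tightness of the length upper bound for TFS: suppose k ≥ 2, every length-(k−1) string over Σ occurs exactly once as a substring of W (W is an order-(k−1) de Bruijn sequence over Σ), n−k is even, and S = {1,3,5,…,n−k−1}. Then every string X over Σ∪{#} satisfying properties C1, P1 and P2 has length |X| ≥ ⌈(n−k+1)/2⌉·k + ⌊(n−k+1)/2⌋. -/
/-- Number of occurrences (starting positions) of `P` as a substring of `T`. -/
def strFreq {α : Type*} [DecidableEq α] (T P : List α) : ℕ :=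
  ((Finset.range (T.length + 1 - P.length)).filter
    (fun i => (T.drop i).take P.length = P)).card

/-- Strings over `Σ ∪ {#}` are modelled as lists over `Option α`, where `none` is the
separator `#` and `some a` (for `a : α`) is a letter of `Σ`.
`IUset W S k U` is the set `I_U` of positions `i` of `U` such that `U[i..i+k−1]` is a
length-`k` string over `Σ` which is not a sensitive pattern (a sensitive pattern being a
string of the form `W[j..j+k−1]` with `j ∈ S`). -/
def IUset {α : Type*} [DecidableEq α] (W : List α) (S : Finset ℕ) (k : ℕ)
    (U : List (Option α)) : Finset ℕ :=
  (Finset.range (U.length + 1 - k)).filter (fun i =>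
    (∀ x ∈ (U.drop i).take k, x ≠ none) ∧
    ¬ ∃ j ∈ S, ((U.drop i).take k).reduceOption = (W.drop j).take k)

/-- Property C1: no sensitive pattern occurs in `U`. -/
def PropC1 {α : Type*} [DecidableEq α] (W : List α) (S : Finset ℕ) (k : ℕ)
    (U : List (Option α)) : Prop :=
  ∀ j ∈ S, ¬ ((((W.drop j).take k).map some) <:+: U)

/-- Property P1 (t-chain equivalence `I_W ≡ I_U`): the two sets of positions have the same
cardinality and, for every `j`, the length-`k` substring of `U` at the `j`-th smallest
position of `I_U` equals the length-`k` substring of `W` at the `j`-th smallest position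
of `I_W`. -/
def PropP1 {α : Type*} [DecidableEq α] (W : List α) (S : Finset ℕ) (k : ℕ)
    (U : List (Option α)) : Prop :=
  (IUset W S k (W.map some)).card = (IUset W S k U).card ∧
  ∀ j < (IUset W S k (W.map some)).card,
    (U.drop (((IUset W S k U).sort (· ≤ ·)).getD j 0)).take k =
    ((W.map some).drop (((IUset W S k (W.map some)).sort (· ≤ ·)).getD j 0)).take k

/-- Property P2: every length-`k` string over `Σ` that is not a sensitive pattern occurs
equally often in `U` and in `W`. -/
def PropP2 {α : Type*} [DecidableEq α] (W : List α) (S : Finset ℕ) (k : ℕ)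
    (U : List (Option α)) : Prop :=
  ∀ P : List α, P.length = k → (∀ j ∈ S, P ≠ (W.drop j).take k) →
    strFreq U (P.map some) = strFreq W P

/-- `i` is the p-predecessor of `j` in the set of positions `F` (w.r.t. the string `U`):
`i` is the largest element of `F` smaller than `j`, and the length-`k` substrings of `U`
at `i` and `j` have a suffix-prefix overlap of length `k−1`. -/
def IsPPred {α : Type*} (U : List (Option α)) (k : ℕ) (F : Finset ℕ) (i j : ℕ) : Prop :=
  i ∈ F ∧ j ∈ F ∧ i < j ∧ (∀ m ∈ F, m < j → m ≤ i) ∧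
  (U.drop (i + 1)).take (k - 1) = (U.drop j).take (k - 1)

/-- A p-chain of `F`: a subset `J ⊆ F` such that every element of `J` other than its
minimum has its p-predecessor in `J`. -/
def IsPChain {α : Type*} (U : List (Option α)) (k : ℕ) (F : Finset ℕ)
    (J : Finset ℕ) : Prop :=
  J ⊆ F ∧ ∀ x ∈ J, (∀ y ∈ J, x ≤ y) ∨ ∃ i ∈ J, IsPPred U k F i x

/-- Equivalence of chains: same cardinality, and position-wise (in increasing order) the
length-`k` substrings agree. -/
def ChainEquiv {α : Type*} [DecidableEq α] (U V : List (Option α)) (k : ℕ)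
    (JU JV : Finset ℕ) : Prop :=
  JU.card = JV.card ∧
  ∀ j < JU.card,
    (U.drop ((JU.sort (· ≤ ·)).getD j 0)).take k =
    (V.drop ((JV.sort (· ≤ ·)).getD j 0)).take k

/-- Property Π1: there is an injective map from the p-chains of `I_W` to the p-chains of
`I_U` sending every p-chain to an equivalent one. -/
def PropPi1 {α : Type*} [DecidableEq α] (W : List α) (S : Finset ℕ) (k : ℕ)
    (U : List (Option α)) : Prop :=
  ∃ f : {J : Finset ℕ // IsPChain (W.map some) k (IUset W S k (W.map some)) J} →
        {J : Finset ℕ // IsPChain U k (IUset W S k U) J},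
    Function.Injective f ∧
    ∀ J, ChainEquiv (W.map some) U k J.1 (f J).1

/-!
Since every length-`(k−1)` string occurs once in `W`, the length-`k` substrings of `W` are
pairwise distinct, so `I_W` is the set of even positions `0, 2, …, n−k` (with `n − k = 2c`).
By P1 the positions `a₀ < ⋯ < a_c` of `I_X` carry the patterns `W[2j..2j+k−1]`. Consecutive
ones satisfy `a_{j+1} ≥ a_j + k + 1`: otherwise the two windows cover the window at `a_j + 1`,
which then contains no `#` and, by C1, is not sensitive, forcing `a_{j+1} = a_j + 1`; but then
`W[2j+1..2j+k−1] = W[2j+2..2j+k]`, a `(k−1)`-string occurring twice. Hence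
`|X| ≥ a_c + k ≥ (k+1)c + k`.
-/

section Lists

variable {α : Type*}

theorem List.reduceOption_map_some (l : List α) : (l.map some).reduceOption = l := by
  simp [List.reduceOption, List.filterMap_map]

theorem List.map_some_reduceOption {l : List (Option α)} (h : ∀ x ∈ l, x ≠ none) :
    l.reduceOption.map some = l := by
  induction l with
  | nil => rfl
  | cons a t ih =>
    obtain ⟨b, rfl⟩ := Option.ne_none_iff_exists'.1 (h a List.mem_cons_self)
    simp [ih fun x hx => h x (List.mem_cons_of_mem _ hx)]

theorem List.forall_mem_take_drop_iff {l : List α} {P : α → Prop} {i k : ℕ} :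
    (∀ x ∈ (l.drop i).take k, P x) ↔
      ∀ q (hq : q < l.length), i ≤ q → q < i + k → P l[q] := by
  simp only [List.forall_mem_iff_getElem, List.length_take, List.length_drop, lt_min_iff,
    List.getElem_take, List.getElem_drop]
  constructor
  · intro h q hq hiq hqk
    simpa [Nat.add_sub_cancel' hiq] using h (q - i) ⟨by omega, by omega⟩
  · intro h t ht
    exact h (i + t) (by omega) (by omega) (by omega)

theorem List.take_drop_succ_eq_of_take_drop_eq {X Y Z : List α} {a i i' k : ℕ}
    (ha : (X.drop a).take k = (Y.drop i).take k)
    (hb : (X.drop (a + 1)).take k = (Z.drop i').take k) :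
    (Y.drop (i + 1)).take (k - 1) = (Z.drop i').take (k - 1) := by
  have h₁ := congrArg (List.drop 1) ha
  have h₂ := congrArg (List.take (k - 1)) hb
  simp only [List.drop_take, List.drop_drop, List.take_take,
    min_eq_left (Nat.sub_le k 1)] at h₁ h₂
  rw [← h₁, h₂]

end Lists

section SortedPositions

variable {α : Type*} [LinearOrder α]

theorem Finset.sort_getD_mem {s : Finset α} {j : ℕ} (d : α)
    (hj : j < s.card) : s.sort.getD j d ∈ s := by
  rw [List.getD_eq_getElem _ _ (by simpa using hj), ← Finset.mem_sort (· ≤ ·)]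
  exact List.getElem_mem _

theorem Finset.sort_getD_lt_sort_getD {s : Finset α} {i j : ℕ} (d : α)
    (hij : i < j) (hj : j < s.card) : s.sort.getD i d < s.sort.getD j d := by
  have hlen := s.length_sort (· ≤ ·)
  rw [List.getD_eq_getElem _ _ (by omega), List.getD_eq_getElem _ _ (by omega)]
  exact (Finset.sortedLT_sort s).strictMono_get
    (show (⟨i, by omega⟩ : Fin _) < ⟨j, by omega⟩ from hij)

theorem Finset.sort_getD_le_sort_getD {s : Finset α} {i j : ℕ} (d : α)
    (hij : i ≤ j) (hj : j < s.card) : s.sort.getD i d ≤ s.sort.getD j d := by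
  rcases hij.eq_or_lt with rfl | h
  · exact le_rfl
  · exact (Finset.sort_getD_lt_sort_getD d h hj).le

theorem Finset.sort_getD_succ_le_of_mem {s : Finset α} {j : ℕ} {p : α} (d : α)
    (hj : j + 1 < s.card) (hp : p ∈ s) (hjp : s.sort.getD j d < p) :
    s.sort.getD (j + 1) d ≤ p := by
  obtain ⟨t, ht, rfl⟩ := List.getElem_of_mem ((Finset.mem_sort (· ≤ ·)).2 hp)
  rw [Finset.length_sort] at ht
  rw [← List.getD_eq_getElem _ d] at hjp ⊢
  have hjt : j < t := by
    by_contra! htj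
    exact (Finset.sort_getD_le_sort_getD d htj (by omega)).not_gt hjp
  exact Finset.sort_getD_le_sort_getD d hjt ht

end SortedPositions

theorem add_mul_le_of_forall_add_le_succ {f : ℕ → ℕ} {d m : ℕ}
    (h : ∀ j, j + 1 < m → f j + d ≤ f (j + 1)) : ∀ j < m, f 0 + d * j ≤ f j
  | 0, _ => le_rfl
  | j + 1, hj => by
    have := add_mul_le_of_forall_add_le_succ h j (by omega)
    have := h j hj
    rw [Nat.mul_succ]
    omega

section Frequencies

variable {α : Type*} [DecidableEq α]

theorem eq_of_take_drop_eq_of_strFreq_le_one {T : List α} {l i j : ℕ}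
    (hT : strFreq T ((T.drop i).take l) ≤ 1) (hi : i + l ≤ T.length) (hj : j + l ≤ T.length)
    (h : (T.drop i).take l = (T.drop j).take l) : i = j := by
  have hlen : ((T.drop i).take l).length = l := by simp; omega
  refine Finset.card_le_one.1 hT i ?_ j ?_ <;>
    refine Finset.mem_filter.2 ⟨Finset.mem_range.2 (by rw [hlen]; omega), ?_⟩
  exacts [by rw [hlen], by rw [hlen, h]]

theorem eq_of_take_drop_eq_of_deBruijn {T : List α} {l k i j : ℕ}
    (hT : ∀ P : List α, P.length = l → strFreq T P = 1) (hlk : l ≤ k)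
    (hi : i + k ≤ T.length) (hj : j + k ≤ T.length)
    (h : (T.drop i).take k = (T.drop j).take k) : i = j := by
  have h' := congrArg (List.take l) h
  simp only [List.take_take, min_eq_left hlk] at h'
  exact eq_of_take_drop_eq_of_strFreq_le_one (hT _ (by simp; omega)).le
    (by omega) (by omega) h'

end Frequencies

section Positions

variable {α : Type*} [DecidableEq α] {W : List α} {S : Finset ℕ} {k : ℕ}

theorem mem_IUset {U : List (Option α)} {i : ℕ} :
    i ∈ IUset W S k U ↔ i + k ≤ U.length ∧ (∀ x ∈ (U.drop i).take k, x ≠ none) ∧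
      ¬ ∃ j ∈ S, ((U.drop i).take k).reduceOption = (W.drop j).take k := by
  rw [IUset, Finset.mem_filter, Finset.mem_range]
  exact and_congr_left fun _ => by omega

theorem mem_IUset_map_some {i : ℕ} :
    i ∈ IUset W S k (W.map some) ↔
      i + k ≤ W.length ∧ ∀ j ∈ S, (W.drop i).take k ≠ (W.drop j).take k := by
  simp only [mem_IUset, ← List.map_drop, ← List.map_take, List.reduceOption_map_some,
    List.length_map, List.mem_map]
  simp

theorem PropC1.mem_IUset {U : List (Option α)} (hC1 : PropC1 W S k U) {i : ℕ}
    (hi : i + k ≤ U.length) (hletters : ∀ x ∈ (U.drop i).take k, x ≠ none) :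
    i ∈ IUset W S k U := by
  refine _root_.mem_IUset.2 ⟨hi, hletters, fun ⟨j, hj, hEq⟩ => hC1 j hj ?_⟩
  rw [← hEq, List.map_some_reduceOption hletters]
  exact (List.take_prefix _ _).isInfix.trans (List.drop_suffix _ _).isInfix

theorem PropC1.mem_IUset_of_le_of_le {U : List (Option α)} (hC1 : PropC1 W S k U)
    {a b p : ℕ} (ha : a ∈ IUset W S k U) (hb : b ∈ IUset W S k U) (hba : b ≤ a + k)
    (hap : a ≤ p) (hpb : p ≤ b) : p ∈ IUset W S k U := by
  obtain ⟨-, ha, -⟩ := _root_.mem_IUset.1 ha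
  obtain ⟨hbU, hb, -⟩ := _root_.mem_IUset.1 hb
  rw [List.forall_mem_take_drop_iff] at ha hb
  refine hC1.mem_IUset (by omega) (List.forall_mem_take_drop_iff.2 fun q hq hpq hqk => ?_)
  rcases lt_or_ge q (a + k) with h | h
  · exact ha q hq (by omega) h
  · exact hb q hq (by omega) (by omega)

end Positions

section DeBruijn

variable {α : Type*} [DecidableEq α] {W : List α} {S : Finset ℕ} {k : ℕ}

theorem mem_IUset_map_some_iff_of_deBruijn
    (hdB : ∀ P : List α, P.length = k - 1 → strFreq W P = 1)
    (hS : ∀ j ∈ S, j + k ≤ W.length) {i : ℕ} :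
    i ∈ IUset W S k (W.map some) ↔ i + k ≤ W.length ∧ i ∉ S := by
  rw [mem_IUset_map_some]
  refine and_congr_right fun hi => ⟨fun h hiS => h i hiS rfl, fun hiS j hj hij => hiS ?_⟩
  rwa [eq_of_take_drop_eq_of_deBruijn hdB (Nat.sub_le k 1) hi (hS j hj) hij]

theorem sort_IUset_map_some_of_deBruijn {n c : ℕ} (hn : W.length = n) (hkn : k ≤ n)
    (hdB : ∀ P : List α, P.length = k - 1 → strFreq W P = 1) (hc : n - k = c + c)
    (hS : S = (Finset.range (n - k)).filter (fun i => i % 2 = 1)) :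
    (IUset W S k (W.map some)).sort (· ≤ ·) = (List.range (c + 1)).map (2 * ·) := by
  have hIW : IUset W S k (W.map some) =
      (Finset.range (c + 1)).map ⟨(2 * ·), mul_right_injective₀ two_ne_zero⟩ := by
    ext i
    rw [mem_IUset_map_some_iff_of_deBruijn hdB fun j hj => by simp [hS] at hj; omega]
    simp only [hS, Finset.mem_filter, Finset.mem_range, Finset.mem_map,
      Function.Embedding.coeFn_mk]
    constructor
    · rintro ⟨hi, hiS⟩
      exact ⟨i / 2, by omega, by omega⟩
    · rintro ⟨t, ht, rfl⟩
      omega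
  rw [hIW, ← StrictMonoOn.map_finsetSort _ _ fun a _ b _ hab => by simp; omega,
    Finset.sort_range]
  rfl

end DeBruijn

theorem PropC1.add_succ_le_of_consecutive {α : Type*} [DecidableEq α] {W : List α}
    {S : Finset ℕ} {k : ℕ} {X : List (Option α)} (hC1 : PropC1 W S k X)
    (hdB : ∀ P : List α, P.length = k - 1 → strFreq W P = 1)
    {a b i i' : ℕ} (hab : a < b) (ha : a ∈ IUset W S k X) (hb : b ∈ IUset W S k X)
    (hconsec : ∀ p ∈ IUset W S k X, a < p → b ≤ p)
    (hXa : (X.drop a).take k = ((W.map some).drop i).take k)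
    (hXb : (X.drop b).take k = ((W.map some).drop i').take k)
    (hi : i + k ≤ W.length) (hi' : i' + k ≤ W.length) (hii' : i' ≠ i + 1) :
    a + k + 1 ≤ b := by
  by_contra! hba
  obtain rfl : b = a + 1 :=
    (hconsec _ (hC1.mem_IUset_of_le_of_le ha hb (by omega) (by omega) hab)
      (lt_add_one a)).antisymm hab
  have hoverlap := List.take_drop_succ_eq_of_take_drop_eq hXa hXb
  simp only [← List.map_drop, ← List.map_take] at hoverlap
  exact hii' (eq_of_take_drop_eq_of_deBruijn hdB le_rfl (by omega) (by omega)
    (List.map_injective_iff.2 (Option.some_injective α) hoverlap)).symm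

theorem stmt7_general {α : Type*} [DecidableEq α] (W : List α) (n k : ℕ)
    (hn : W.length = n) (hkn : k < n)
    (hdeBruijn : ∀ P : List α, P.length = k - 1 → strFreq W P = 1)
    (heven : Even (n - k))
    (S : Finset ℕ) (hS : S = (Finset.range (n - k)).filter (fun i => i % 2 = 1)) :
    ∀ X : List (Option α), PropC1 W S k X → PropP1 W S k X → PropP2 W S k X →
      ((n - k + 2) / 2) * k + (n - k + 1) / 2 ≤ X.length := by
  rintro X hC1 ⟨hcard, hwin⟩ -
  obtain ⟨c, hc⟩ := heven
  have hsortW := sort_IUset_map_some_of_deBruijn hn hkn.le hdeBruijn hc hS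
  have hcardX : (IUset W S k X).card = c + 1 := by
    rw [← hcard, ← Finset.length_sort (· ≤ ·), hsortW, List.length_map, List.length_range]
  have hwinX : ∀ j < c + 1, (X.drop (((IUset W S k X).sort (· ≤ ·)).getD j 0)).take k =
      ((W.map some).drop (2 * j)).take k := fun j hj => by
    rw [hwin j (by omega), hsortW, List.getD_eq_getElem _ _ (by simpa using hj)]
    simp
  have hgap : ∀ j, j + 1 < c + 1 → ((IUset W S k X).sort (· ≤ ·)).getD j 0 + (k + 1) ≤
      ((IUset W S k X).sort (· ≤ ·)).getD (j + 1) 0 := fun j hj =>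
    hC1.add_succ_le_of_consecutive hdeBruijn
      (Finset.sort_getD_lt_sort_getD 0 (lt_add_one j) (by omega))
      (Finset.sort_getD_mem 0 (by omega)) (Finset.sort_getD_mem 0 (by omega))
      (fun p hp => Finset.sort_getD_succ_le_of_mem 0 (by omega) hp)
      (hwinX j (by omega)) (hwinX (j + 1) hj) (by omega) (by omega) (by omega)
  have hlast := add_mul_le_of_forall_add_le_succ hgap c (lt_add_one c)
  have hfits := (mem_IUset.1 (Finset.sort_getD_mem 0 (s := IUset W S k X) (j := c) (by omega))).1
  calc (n - k + 2) / 2 * k + (n - k + 1) / 2 = (k + 1) * c + k := by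
        rw [hc, show (c + c + 2) / 2 = c + 1 by omega, show (c + c + 1) / 2 = c by omega]
        ring
    _ ≤ X.length := by omega

/-- tightness of the TFS length upper bound: if `k ≥ 2`, every
length-`(k−1)` string over `Σ` occurs exactly once as a substring of `W` (an
order-`(k−1)` de Bruijn sequence), `n − k` is even, and `S = {1,3,5,…,n−k−1}`, then
every string `X` over `Σ ∪ {#}` satisfying C1, P1 and P2 has
`|X| ≥ ⌈(n−k+1)/2⌉·k + ⌊(n−k+1)/2⌋`. -/
theorem stmt7 {α : Type*} [Fintype α] [DecidableEq α] (W : List α) (n k : ℕ)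
    (hn : W.length = n) (hk : 2 ≤ k) (hkn : k < n)
    (hdeBruijn : ∀ P : List α, P.length = k - 1 → strFreq W P = 1)
    (heven : Even (n - k))
    (S : Finset ℕ) (hS : S = (Finset.range (n - k)).filter (fun i => i % 2 = 1)) :
    ∀ X : List (Option α), PropC1 W S k X → PropP1 W S k X → PropP2 W S k X →
      ((n - k + 2) / 2) * k + (n - k + 1) / 2 ≤ X.length :=
  stmt7_general W n k hn hkn hdeBruijn heven S hS
end

section
/- Optimal-solution correspondence in the MCK-to-MCSR reduction: in the setting of the reduction with costs c_{ij} ≥ 0, weights w_{ij}, threshold b, τ = 2 and θ = δ − b, call a choice function g MCK-feasible if Σ_{i=1}^{δ} w_{i,g(i)} ≥ b, and call the replacement string Z_g MCSR-feasible if Σ_{p: Y[p]=#} Sub(p, Z_g[p]) ≤ θ. Then g is MCK-feasible and minimizes Σ_{i=1}^{δ} c_{i,g(i)} over all MCK-feasible choice functions if and only if Z_g is MCSR-feasible and minimizes the total ghost cost Σ_{p: Y[p]=#, Freq_Y(Z[p])<τ≤Freq_Z(Z[p])} Ghost(p, Z[p]) over all MCSR-feasible replacement strings Z = Z_h with h a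 choice function. -/
/-!
The `#`-positions of `Y` are exactly `μ(1) < … < μ(δ)`, and `Z_h` carries `α_{i,h(i)}` at
`μ(i)`. As the letters `α_{ij}` are pairwise distinct, `α_{i,h(i)}` occurs once in `Y` and
twice in `Z_h`, so every `#`-position of `Z_h` is a ghost. Hence the ghost cost of `Z_h` is
`Σ_i c_{i,h(i)}` and its substitution weight is `δ − Σ_i w_{i,h(i)}`: MCSR-feasibility of `Z_h`
is MCK-feasibility of `h`, and the two objectives coincide.
-/

/-- The string `Y = α_{11}…α_{1n_1} # α_{21}…α_{2n_2} # … # α_{δ1}…α_{δn_δ} #` of the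
MCK-to-MCSR reduction, over `Σ ∪ {#}` modelled as `Option β` (`none` is `#`). -/
def Ystr {β : Type*} {δ : ℕ} {n : Fin δ → ℕ} (a : (i : Fin δ) → Fin (n i) → β) :
    List (Option β) :=
  (List.ofFn (fun i => (List.ofFn fun j => some (a i j)) ++ [none])).flatten

/-- The string `Z_g` obtained from `Y` by replacing, for each `i`, the `i`-th occurrence
of `#` (the one terminating the `i`-th block) with the letter `α_{i,g(i)}`. -/
def Zstr {β : Type*} {δ : ℕ} {n : Fin δ → ℕ} (a : (i : Fin δ) → Fin (n i) → β)
    (g : (i : Fin δ) → Fin (n i)) : List (Option β) :=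
  (List.ofFn (fun i => (List.ofFn fun j => some (a i j)) ++ [some (a i (g i))])).flatten

/-- `μ(i)`: the position of the `i`-th occurrence of `#` in `Y`. -/
def muPos {δ : ℕ} (n : Fin δ → ℕ) (i : Fin δ) : ℕ :=
  (∑ i' ∈ Finset.Iio i, (n i' + 1)) + n i

/-- The set of positions of `#` in `Y`. -/
def hashPos {β : Type*} [DecidableEq β] {δ : ℕ} {n : Fin δ → ℕ}
    (a : (i : Fin δ) → Fin (n i) → β) : Finset ℕ :=
  (Finset.range (Ystr a).length).filter (fun p => (Ystr a)[p]? = some none)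

open Finset

theorem Fin.sum_Iio_succ {M : Type*} [AddCommMonoid M] {m : ℕ} (f : Fin (m + 1) → M)
    (i : Fin m) : ∑ x ∈ Iio i.succ, f x = f 0 + ∑ x ∈ Iio i, f x.succ := by
  rw [Iio_eq_Ico, bot_eq_zero, ← Ioo_insert_left (Fin.succ_pos i), ← Fin.map_succEmb_Iio,
    sum_insert (by simp), sum_map]
  rfl

theorem List.count_ofFn {γ : Type*} [BEq γ] [LawfulBEq γ] [DecidableEq γ] {m : ℕ}
    (f : Fin m → γ) (x : γ) : (List.ofFn f).count x = #{j | f j = x} := by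
  obtain rfl := lawful_beq_subsingleton ‹BEq γ› instBEqOfDecidableEq
  rw [← Multiset.coe_count, ← Fin.univ_val_map, Multiset.count_map, card_def, filter_val]
  simp only [eq_comm]

theorem List.getElem?_flatten_ofFn {γ : Type*} :
    ∀ {m : ℕ} (B : Fin m → List γ) (i : Fin m) {k : ℕ}, k < (B i).length →
      (List.ofFn B).flatten[∑ i' ∈ Iio i, (B i').length + k]? = (B i)[k]?
  | _ + 1, B, i, k, hk => by
    rw [List.ofFn_succ, List.flatten_cons]
    cases i using Fin.cases with
    | zero =>
      rw [show Iio (0 : Fin (_ + 1)) = ∅ from Iio_bot, sum_empty, Nat.zero_add]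
      exact List.getElem?_append_left hk
    | succ i =>
      rw [Fin.sum_Iio_succ, Nat.add_assoc, List.getElem?_append_right (by omega),
        Nat.add_sub_cancel_left]
      exact getElem?_flatten_ofFn (fun i' => B i'.succ) i hk

theorem List.exists_eq_sum_add_of_lt_length_flatten_ofFn {γ : Type*} :
    ∀ {m : ℕ} (B : Fin m → List γ) {p : ℕ}, p < (List.ofFn B).flatten.length →
      ∃ i, ∃ k < (B i).length, p = ∑ i' ∈ Iio i, (B i').length + k
  | 0, B, p, hp => by simp at hp
  | _ + 1, B, p, hp => by
    rw [List.ofFn_succ, List.flatten_cons, List.length_append] at hp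
    by_cases h0 : p < (B 0).length
    · exact ⟨0, p, h0, by simp⟩
    · obtain ⟨i, k, hk, hp'⟩ :=
        exists_eq_sum_add_of_lt_length_flatten_ofFn (fun i' => B i'.succ)
          (p := p - (B 0).length) (by omega)
      exact ⟨i.succ, k, hk, by rw [Fin.sum_Iio_succ]; omega⟩

section Reduction

variable {β : Type*} {δ : ℕ} {n : Fin δ → ℕ} (a : (i : Fin δ) → Fin (n i) → β)

/-- The common shape of `Y` (`e i = #`) and `Z_h` (`e i = α_{i,h(i)}`). -/
def blockString (e : Fin δ → Option β) : List (Option β) :=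
  (List.ofFn fun i => (List.ofFn fun j => some (a i j)) ++ [e i]).flatten

theorem Ystr_eq_blockString : Ystr a = blockString a fun _ => none := rfl

theorem Zstr_eq_blockString (h : (i : Fin δ) → Fin (n i)) :
    Zstr a h = blockString a fun i => some (a i (h i)) := rfl

theorem muPos_eq_sum_length (e : Fin δ → Option β) (i : Fin δ) :
    muPos n i = ∑ i' ∈ Iio i, ((List.ofFn fun j => some (a i' j)) ++ [e i']).length + n i := by
  simp [muPos]

theorem getElem?_blockString_muPos (e : Fin δ → Option β) (i : Fin δ) :
    (blockString a e)[muPos n i]? = some (e i) := by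
  rw [blockString, muPos_eq_sum_length a e, List.getElem?_flatten_ofFn _ _ (by simp)]
  simp

theorem getD_Zstr_muPos (h : (i : Fin δ) → Fin (n i)) (i : Fin δ) :
    (Zstr a h).getD (muPos n i) none = some (a i (h i)) := by
  rw [List.getD_eq_getElem?_getD, Zstr_eq_blockString, getElem?_blockString_muPos]
  rfl

theorem muPos_strictMono : StrictMono (muPos n) := by
  intro i j hij
  have hi : muPos n i < ∑ i' ∈ Iic i, (n i' + 1) := by
    rw [← Iio_insert, sum_insert (by simp), muPos]
    omega
  have hle : ∑ i' ∈ Iic i, (n i' + 1) ≤ ∑ i' ∈ Iio j, (n i' + 1) :=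
    sum_le_sum_of_subset fun x hx => mem_Iio.2 ((mem_Iic.1 hx).trans_lt hij)
  have hj : ∑ i' ∈ Iio j, (n i' + 1) ≤ muPos n j := Nat.le_add_right _ _
  omega

variable [DecidableEq β]

theorem mem_hashPos_iff {p : ℕ} : p ∈ hashPos a ↔ ∃ i, muPos n i = p := by
  constructor
  · intro hp
    obtain ⟨hlt, hnone⟩ := by simpa only [hashPos, mem_filter, mem_range] using hp
    obtain ⟨i, k, hk, rfl⟩ := List.exists_eq_sum_add_of_lt_length_flatten_ofFn _ hlt
    rw [Ystr, List.getElem?_flatten_ofFn _ i hk] at hnone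
    refine ⟨i, ?_⟩
    rcases Nat.lt_or_ge k (n i) with hkn | hkn
    · simp [List.getElem?_append_left, hkn] at hnone
    · rw [muPos_eq_sum_length a (fun _ => none)]
      simp only [List.length_append, List.length_ofFn, List.length_singleton] at hk ⊢
      omega
  · rintro ⟨i, rfl⟩
    have hnone : (Ystr a)[muPos n i]? = some none := getElem?_blockString_muPos a _ i
    simpa [hashPos, hnone] using (List.getElem?_eq_some_iff.1 hnone).1

theorem hashPos_eq_image_muPos : hashPos a = univ.image (muPos n) := by
  ext p
  simp [mem_hashPos_iff]

theorem sum_hashPos_Zstr {M : Type*} [AddCommMonoid M] (F : ℕ → Option β → M)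
    (h : (i : Fin δ) → Fin (n i)) :
    ∑ p ∈ hashPos a, F p ((Zstr a h).getD p none) = ∑ i, F (muPos n i) (some (a i (h i))) := by
  rw [hashPos_eq_image_muPos, sum_image fun _ _ _ _ hij => muPos_strictMono.injective hij]
  simp only [getD_Zstr_muPos]

theorem count_blockString (e : Fin δ → Option β) (x : Option β) :
    (blockString a e).count x = #{p : Σ i, Fin (n i) | some (a p.1 p.2) = x} + #{i | e i = x} := by
  have hblock : ∀ i, ((List.ofFn fun j => some (a i j)) ++ [e i]).count x =
      #{j | some (a i j) = x} + if e i = x then 1 else 0 := fun i => by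
    rw [List.count_append, List.count_ofFn, List.count_singleton]
    simp only [beq_iff_eq]
  simp only [blockString, List.count_flatten, List.map_ofFn, List.sum_ofFn, Function.comp_def,
    hblock, sum_add_distrib, card_filter, Fintype.sum_sigma]

variable {a} (ha : Function.Injective fun p : Σ i : Fin δ, Fin (n i) => a p.1 p.2)
include ha

theorem card_filter_letter_eq_one (i : Fin δ) (j : Fin (n i)) :
    #{p : Σ i, Fin (n i) | some (a p.1 p.2) = some (a i j)} = 1 := by
  have hletter : ∀ p : Σ i, Fin (n i), some (a p.1 p.2) = some (a i j) ↔ p = ⟨i, j⟩ :=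
    fun p => Option.some_inj.trans (ha.eq_iff (a := p) (b := ⟨i, j⟩))
  simp only [hletter, filter_eq', mem_univ, if_true, card_singleton]

theorem count_Ystr_letter (i : Fin δ) (j : Fin (n i)) : (Ystr a).count (some (a i j)) = 1 := by
  rw [Ystr_eq_blockString, count_blockString, card_filter_letter_eq_one ha]
  simp

theorem count_Zstr_chosen_letter (h : (i : Fin δ) → Fin (n i)) (i : Fin δ) :
    (Zstr a h).count (some (a i (h i))) = 2 := by
  have hchosen : ∀ i', some (a i' (h i')) = some (a i (h i)) ↔ i' = i := fun i' =>
    ⟨fun he => congrArg Sigma.fst (ha (a₁ := ⟨i', h i'⟩) (a₂ := ⟨i, h i⟩) (Option.some.inj he)),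
      by rintro rfl; rfl⟩
  rw [Zstr_eq_blockString, count_blockString, card_filter_letter_eq_one ha]
  simp only [hchosen, filter_eq', mem_univ, if_true, card_singleton]

theorem filter_hashPos_ghost_eq_self (h : (i : Fin δ) → Fin (n i)) :
    (hashPos a).filter (fun p =>
        (Ystr a).count ((Zstr a h).getD p none) < 2 ∧
        2 ≤ (Zstr a h).count ((Zstr a h).getD p none)) = hashPos a := by
  refine filter_true_of_mem fun p hp => ?_
  obtain ⟨i, rfl⟩ := (mem_hashPos_iff a).1 hp
  rw [getD_Zstr_muPos, count_Ystr_letter ha, count_Zstr_chosen_letter ha]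
  omega

end Reduction

theorem stmt12_general {β : Type*} [DecidableEq β] (δ : ℕ)
    (n : Fin δ → ℕ)
    (a : (i : Fin δ) → Fin (n i) → β)
    (ha : Function.Injective fun p : Σ i : Fin δ, Fin (n i) => a p.1 p.2)
    (g : (i : Fin δ) → Fin (n i))
    (c : (i : Fin δ) → Fin (n i) → ℝ)
    (w : (i : Fin δ) → Fin (n i) → ℝ) (b : ℝ)
    (Ghost Sub : ℕ → Option β → ℝ)
    (hGhost : ∀ i j, Ghost (muPos n i) (some (a i j)) = c i j)
    (hSub : ∀ i j, Sub (muPos n i) (some (a i j)) = 1 - w i j) :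
    ((b ≤ ∑ i, w i (g i)) ∧
      (∀ h : (i : Fin δ) → Fin (n i), b ≤ ∑ i, w i (h i) →
        (∑ i, c i (g i)) ≤ ∑ i, c i (h i)))
    ↔
    ((∑ p ∈ hashPos a, Sub p ((Zstr a g).getD p none)) ≤ (δ : ℝ) - b ∧
      (∀ h : (i : Fin δ) → Fin (n i),
        (∑ p ∈ hashPos a, Sub p ((Zstr a h).getD p none)) ≤ (δ : ℝ) - b →
        (∑ p ∈ (hashPos a).filter (fun p =>
            (Ystr a).count ((Zstr a g).getD p none) < 2 ∧
            2 ≤ (Zstr a g).count ((Zstr a g).getD p none)),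
          Ghost p ((Zstr a g).getD p none)) ≤
        (∑ p ∈ (hashPos a).filter (fun p =>
            (Ystr a).count ((Zstr a h).getD p none) < 2 ∧
            2 ≤ (Zstr a h).count ((Zstr a h).getD p none)),
          Ghost p ((Zstr a h).getD p none)))) := by
  have hSubSum : ∀ h : (i : Fin δ) → Fin (n i),
      ∑ p ∈ hashPos a, Sub p ((Zstr a h).getD p none) = δ - ∑ i, w i (h i) := fun h => by
    rw [sum_hashPos_Zstr]
    simp [hSub, sum_sub_distrib]
  have hGhostSum : ∀ h : (i : Fin δ) → Fin (n i),
      ∑ p ∈ (hashPos a).filter (fun p =>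
          (Ystr a).count ((Zstr a h).getD p none) < 2 ∧
          2 ≤ (Zstr a h).count ((Zstr a h).getD p none)),
        Ghost p ((Zstr a h).getD p none) = ∑ i, c i (h i) := fun h => by
    simp only [filter_hashPos_ghost_eq_self ha, sum_hashPos_Zstr, hGhost]
  simp only [hSubSum, hGhostSum, sub_le_sub_iff_left]

/-- optimal-solution correspondence in the MCK-to-MCSR reduction: with
`τ = 2`, `θ = δ − b`, `Ghost(μ(i), α_{ij}) = c_{ij}` and `Sub(μ(i), α_{ij}) = 1 − w_{ij}`,
a choice function `g` is MCK-feasible (`Σ_i w_{i,g(i)} ≥ b`) and minimizes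
`Σ_i c_{i,g(i)}` over all MCK-feasible choice functions if and only if `Z_g` is
MCSR-feasible (total substitution weight `≤ θ`) and minimizes the total ghost cost over
all MCSR-feasible replacement strings `Z_h`. -/
theorem stmt12 {β : Type*} [DecidableEq β] (δ : ℕ) (hδ : 1 ≤ δ)
    (n : Fin δ → ℕ) (hn : ∀ i, 1 ≤ n i)
    (a : (i : Fin δ) → Fin (n i) → β)
    (ha : Function.Injective fun p : Σ i : Fin δ, Fin (n i) => a p.1 p.2)
    (g : (i : Fin δ) → Fin (n i))
    (c : (i : Fin δ) → Fin (n i) → ℝ) (hc : ∀ i j, 0 ≤ c i j)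
    (w : (i : Fin δ) → Fin (n i) → ℝ) (b : ℝ)
    (Ghost Sub : ℕ → Option β → ℝ)
    (hGhost : ∀ i j, Ghost (muPos n i) (some (a i j)) = c i j)
    (hSub : ∀ i j, Sub (muPos n i) (some (a i j)) = 1 - w i j) :
    ((b ≤ ∑ i, w i (g i)) ∧
      (∀ h : (i : Fin δ) → Fin (n i), b ≤ ∑ i, w i (h i) →
        (∑ i, c i (g i)) ≤ ∑ i, c i (h i)))
    ↔
    ((∑ p ∈ hashPos a, Sub p ((Zstr a g).getD p none)) ≤ (δ : ℝ) - b ∧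
      (∀ h : (i : Fin δ) → Fin (n i),
        (∑ p ∈ hashPos a, Sub p ((Zstr a h).getD p none)) ≤ (δ : ℝ) - b →
        (∑ p ∈ (hashPos a).filter (fun p =>
            (Ystr a).count ((Zstr a g).getD p none) < 2 ∧
            2 ≤ (Zstr a g).count ((Zstr a g).getD p none)),
          Ghost p ((Zstr a g).getD p none)) ≤
        (∑ p ∈ (hashPos a).filter (fun p =>
            (Ystr a).count ((Zstr a h).getD p none) < 2 ∧
            2 ≤ (Zstr a h).count ((Zstr a h).getD p none)),
          Ghost p ((Zstr a h).getD p none)))) :=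
  stmt12_general δ n a ha g c w b Ghost Sub hGhost hSub
end
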